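/- Let A be a bounded normal operator on a complex Hilbert space H and let L ⊆ H be a finite-dimensional subspace with orthogonal projection P onto L. Then σ(S_L) = Spec₂(A, L). -/

import Mathlib

open scoped InnerProductSpace ComplexConjugate Classical
open Complex ContinuousLinearMap

noncomputable section

variable {H : Type*} [NormedAddCommGroup H] [InnerProductSpace ℂ H] [CompleteSpace H]

/-- Orthogonal projection onto a subspace, as a map into the subspace (junk value `0` if the
subspace admits no orthogonal projection). -/
def projCLM (L : Submodule ℂ H) : H →L[ℂ] ↥L :=
  if h : Submodule.HasOrthogonalProjection L then (letI := h; Submodule.orthogonalProjectionOnto L) else 0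

/-- Compression `P B|_L : L → L` of an operator to a subspace. -/
def compress (B : H →L[ℂ] H) (L : Submodule ℂ H) : ↥L →L[ℂ] ↥L :=
  projCLM L ∘L B ∘L L.subtypeL

/-- Block operator matrix `[[B11, B12],[B21, B22]]` on `E × E`. -/
def block2 {E : Type*} [NormedAddCommGroup E] [NormedSpace ℂ E]
    (B11 B12 B21 B22 : E →L[ℂ] E) : (E × E) →L[ℂ] (E × E) :=
  ((B11 ∘L ContinuousLinearMap.fst ℂ E E) + (B12 ∘L ContinuousLinearMap.snd ℂ E E)).prod
  ((B21 ∘L ContinuousLinearMap.fst ℂ E E) + (B22 ∘L ContinuousLinearMap.snd ℂ E E))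

/-- `S_L = [[P(A + A*)|_L, −P A*A|_L],[I, 0]]` on `L × L`. -/
def SL (A : H →L[ℂ] H) (L : Submodule ℂ H) : (↥L × ↥L) →L[ℂ] (↥L × ↥L) :=
  block2 (compress (A + ContinuousLinearMap.adjoint A) L)
    (-(compress (ContinuousLinearMap.adjoint A * A) L)) 1 0

/-- The second order spectrum of `A` relative to `L`. -/
def Spec2 (A : H →L[ℂ] H) (L : Submodule ℂ H) : Set ℂ :=
  {z | ∃ φ ∈ L, φ ≠ 0 ∧ ∀ ψ ∈ L, ⟪(A - z • 1) φ, (A - (conj z) • 1) ψ⟫_ℂ = 0}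

/-! An eigenvector `(x, y)` of `S_L` for `z` must have `x = z y` and
`z² y - z P(A + A*) y + P A*A y = 0`, i.e. `P (A* - z)(A - z) y = 0`. Since
`⟪(A* - z)(A - z) y, ψ⟫ = ⟪(A - z) y, (A - z̄) ψ⟫`, this says exactly that `z ∈ Spec₂(A, L)`, and
in finite dimension the spectrum of `S_L` consists of its eigenvalues. -/

theorem ContinuousLinearMap.mem_spectrum_iff_exists_apply_eq_smul {𝕜 E : Type*}
    [NontriviallyNormedField 𝕜] [CompleteSpace 𝕜] [NormedAddCommGroup E] [NormedSpace 𝕜 E]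
    [FiniteDimensional 𝕜 E] (T : E →L[𝕜] E) (z : 𝕜) :
    z ∈ spectrum 𝕜 T ↔ ∃ v ≠ 0, T v = z • v := by
  have := FiniteDimensional.complete 𝕜 E
  rw [spectrum_eq, ← Module.End.hasEigenvalue_iff_mem_spectrum, Module.End.hasEigenvalue_iff,
    Submodule.ne_bot_iff]
  simp only [Module.End.mem_eigenspace_iff, coe_coe]
  exact ⟨fun ⟨v, hv, hne⟩ => ⟨v, hne, hv⟩, fun ⟨v, hne, hv⟩ => ⟨v, hv, hne⟩⟩

theorem block2_apply {E : Type*} [NormedAddCommGroup E] [NormedSpace ℂ E]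
    (B11 B12 B21 B22 : E →L[ℂ] E) (x y : E) :
    block2 B11 B12 B21 B22 (x, y) = (B11 x + B12 y, B21 x + B22 y) :=
  rfl

theorem exists_block2_one_zero_apply_eq_smul_iff {E : Type*} [NormedAddCommGroup E]
    [NormedSpace ℂ E] (B C : E →L[ℂ] E) (z : ℂ) :
    (∃ v ≠ 0, block2 B C 1 0 v = z • v) ↔ ∃ y ≠ 0, (z * z) • y - z • B y - C y = 0 := by
  constructor
  · rintro ⟨⟨x, y⟩, hne, hv⟩
    simp only [block2_apply, one_apply_eq_self, zero_apply, add_zero, Prod.smul_mk,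
      Prod.mk.injEq] at hv
    obtain ⟨hx, rfl⟩ := hv
    refine ⟨y, fun hy => hne (by simp [hy]), ?_⟩
    rw [smul_smul] at hx
    rw [← hx, map_smul]
    abel
  · rintro ⟨y, hne, hy⟩
    refine ⟨(z • y, y), fun h => hne (congrArg Prod.snd h), ?_⟩
    rw [sub_sub, sub_eq_zero] at hy
    simp only [block2_apply, one_apply_eq_self, zero_apply, add_zero, Prod.smul_mk, map_smul,
      smul_smul, hy]

section Compression

omit [CompleteSpace H]

variable (L : Submodule ℂ H) [L.HasOrthogonalProjection]

theorem compress_apply (B : H →L[ℂ] H) (y : L) :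
    compress B L y = L.orthogonalProjectionOnto (B y) := by
  rw [compress, projCLM, dif_pos ‹_›]
  rfl

theorem compress_apply_eq_zero_iff (B : H →L[ℂ] H) (y : L) :
    compress B L y = 0 ↔ ∀ ψ ∈ L, ⟪B y, ψ⟫_ℂ = 0 := by
  rw [compress_apply, Submodule.orthogonalProjectionOnto_eq_zero_iff, Submodule.mem_orthogonal']

end Compression

theorem compress_adjoint_sub_smul_mul_sub_smul (L : Submodule ℂ H) [L.HasOrthogonalProjection]
    (A : H →L[ℂ] H) (z : ℂ) (y : L) :
    compress ((adjoint A - z • 1) * (A - z • 1)) L y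
      = (z * z) • y - z • compress (A + adjoint A) L y + compress (adjoint A * A) L y := by
  have hy : L.orthogonalProjectionOnto (y : H) = y :=
    Submodule.orthogonalProjectionOnto_mem_subspace_eq_self y
  simp only [compress_apply, mul_apply_eq_comp, sub_apply, add_apply, smul_apply,
    one_apply_eq_self, map_sub, map_add, map_smul, hy]
  module

theorem mem_Spec2_iff (L : Submodule ℂ H) [L.HasOrthogonalProjection] (A : H →L[ℂ] H)
    (z : ℂ) :
    z ∈ Spec2 A L ↔ ∃ y : L, y ≠ 0 ∧ compress ((adjoint A - z • 1) * (A - z • 1)) L y = 0 := by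
  have hadj : adjoint (A - conj z • 1) = adjoint A - z • 1 := by
    simp [← star_eq_adjoint, star_sub, star_smul]
  have hinner (φ ψ : H) :
      ⟪((adjoint A - z • 1) * (A - z • 1)) φ, ψ⟫_ℂ = ⟪(A - z • 1) φ, (A - conj z • 1) ψ⟫_ℂ := by
    rw [← hadj, mul_apply_eq_comp, adjoint_inner_left]
  simp only [compress_apply_eq_zero_iff, hinner]
  constructor
  · rintro ⟨φ, hφ, hne, h⟩
    exact ⟨⟨φ, hφ⟩, by simpa using hne, h⟩
  · rintro ⟨y, hne, h⟩
    exact ⟨y, y.2, by simpa using hne, h⟩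

theorem stmt9_general (A : H →L[ℂ] H) (L : Submodule ℂ H)
    [FiniteDimensional ℂ ↥L] :
    spectrum ℂ (SL A L) = Spec2 A L := by
  ext z
  rw [mem_spectrum_iff_exists_apply_eq_smul, SL, exists_block2_one_zero_apply_eq_smul_iff,
    mem_Spec2_iff]
  simp only [compress_adjoint_sub_smul_mul_sub_smul, neg_apply, sub_neg_eq_add]

/-- Lemma 3.2: `σ(S_L) = Spec₂(A, L)` for a finite-dimensional subspace `L`. -/
theorem stmt9 (A : H →L[ℂ] H) (hA : IsStarNormal A) (L : Submodule ℂ H)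
    [FiniteDimensional ℂ ↥L] :
    spectrum ℂ (SL A L) = Spec2 A L :=
  stmt9_general A L

end
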